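/- Let k be a field, let G be a finite subgroup of GL_n(k), let H ⊴ G be an abelian normal subgroup, and let c be a positive integer with [G : H] ≤ c. Then for every g ∈ G and every h ∈ H there exist an abelian (commutative) subgroup A of G containing g and an element a ∈ A with det(a) = (det h)^{c!}. (Namely, one may take a = ∏_{i=0}^{c!−1} g^i h g^{-i} and A = ⟨g, a⟩.) -/
import Mathlib


/-- Let `G` be a finite subgroup of `GL n k`, `H ⊴ G` an abelian normal subgroup with
`[G : H] ≤ c`. Then for every `g ∈ G` and `h ∈ H` there are a commutative subgroup
`A ≤ G` containing `g` and an element `a ∈ A` with `det a = (det h) ^ (c !)`. -/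
theorem exists_abelian_subgroup_with_det_pow (n : ℕ) (k : Type*) [Field k]
    (G : Subgroup (GL (Fin n) k)) (hG : Finite G)
    (H : Subgroup G) (hN : H.Normal)
    (hcomm : ∀ a ∈ H, ∀ b ∈ H, a * b = b * a)
    (c : ℕ) (hc : 0 < c) (hidx : H.index ≤ c) :
    ∀ g : G, ∀ h ∈ H,
      ∃ A : Subgroup G, (∀ a ∈ A, ∀ b ∈ A, a * b = b * a) ∧ g ∈ A ∧
        ∃ a ∈ A, (((a : G) : GL (Fin n) k) : Matrix (Fin n) (Fin n) k).det
          = ((((h : G) : GL (Fin n) k)) : Matrix (Fin n) (Fin n) k).det ^ (Nat.factorial c) := by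
  haveI := hG
  haveI := hN
  intro g h hh
  set m := Nat.factorial c with hm
  -- `g ^ m ∈ H`
  have hidx0 : H.index ≠ 0 := H.index_ne_zero_of_finite
  have hdvd : H.index ∣ m := Nat.dvd_factorial (Nat.pos_of_ne_zero hidx0) hidx
  have hgm : g ^ m ∈ H := by
    have h1 : ((g : G ⧸ H)) ^ H.index = 1 := by
      rw [Subgroup.index]
      exact pow_card_eq_one'
    obtain ⟨d, hd⟩ := hdvd
    have h2 : ((g : G ⧸ H)) ^ m = 1 := by
      rw [hd, pow_mul, h1, one_pow]
    rw [← QuotientGroup.mk_pow] at h2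
    exact (QuotientGroup.eq_one_iff _).mp h2
  -- the factors
  set f : ℕ → G := fun i => g ^ i * h * (g ^ i)⁻¹ with hf
  have hfH : ∀ i, f i ∈ H := fun i => hN.conj_mem h hh (g ^ i)
  have hf0 : f 0 = h := by simp [hf]
  have hfm : f m = h := by
    have := hcomm _ hgm _ hh
    simp only [hf]
    rw [mul_inv_eq_iff_eq_mul, this]
  set a : G := ((List.range m).map f).prod with ha
  have haH : a ∈ H := H.list_prod_mem (by
    intro x hx
    simp only [List.mem_map] at hx
    obtain ⟨i, _, rfl⟩ := hx
    exact hfH i)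
  -- `g` commutes with `a`
  have hconj : g * a * g⁻¹ = a := by
    have hmul : g * a * g⁻¹ = ((List.range m).map (fun i => f (i + 1))).prod := by
      calc g * a * g⁻¹ = (MulAut.conj g).toMonoidHom ((List.range m).map f).prod := by
            simp [ha, MulAut.conj_apply]
        _ = ((List.range m).map ((MulAut.conj g).toMonoidHom ∘ f)).prod := by
            rw [map_list_prod, List.map_map]
        _ = ((List.range m).map (fun i => f (i + 1))).prod := by
            congr 1
            refine List.map_congr_left fun i _ => ?_
            show g * f i * g⁻¹ = f (i + 1)
            simp only [hf]
            group
    have hshift : f 0 * ((List.range m).map (fun i => f (i + 1))).prod = a * f m := by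
      have h1 : ((List.range (m + 1)).map f).prod = a * f m := by
        rw [List.range_succ, List.map_append, List.prod_append, ha]
        simp
      have h2 : ((List.range (m + 1)).map f).prod
          = f 0 * ((List.range m).map (fun i => f (i + 1))).prod := by
        rw [List.range_succ_eq_map, List.map_cons, List.prod_cons, List.map_map]
        rfl
      rw [← h2, h1]
    rw [hmul]
    rw [hf0, hfm] at hshift
    have haco : h * a = a * h := hcomm h hh a haH
    calc ((List.range m).map (fun i => f (i + 1))).prod
        = h⁻¹ * (h * ((List.range m).map (fun i => f (i + 1))).prod) := by group
      _ = h⁻¹ * (a * h) := by rw [hshift]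
      _ = h⁻¹ * (h * a) := by rw [haco]
      _ = a := by group
  have hga : g * a = a * g := by
    have := hconj
    rw [mul_inv_eq_iff_eq_mul] at this
    exact this
  -- the abelian subgroup
  refine ⟨Subgroup.closure {g, a}, ?_, Subgroup.subset_closure (by simp),
    a, Subgroup.subset_closure (by simp), ?_⟩
  · -- commutativity
    have hgen : ∀ x ∈ ({g, a} : Set G), ∀ y ∈ ({g, a} : Set G), x * y = y * x := by
      rintro x (rfl | rfl) y (rfl | rfl)
      · rfl
      · exact hga
      · exact hga.symm
      · rfl
    intro x hx y hy
    induction hx, hy using Subgroup.closure_induction₂ with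
    | mem x y hx hy => exact hgen x hx y hy
    | one_left x hx => simp
    | one_right x hx => simp
    | mul_left x y z hx hy hz h1 h2 => exact Commute.mul_left h1 h2
    | mul_right y z x hy hz hx h1 h2 => exact Commute.mul_right h1 h2
    | inv_left x y hx hy h1 => exact Commute.inv_left h1
    | inv_right x y hx hy h1 => exact Commute.inv_right h1
  · -- the determinant computation
    set D : G →* k :=
      { toFun := fun x => (((x : GL (Fin n) k) : Matrix (Fin n) (Fin n) k)).det
        map_one' := by simp
        map_mul' := by intro x y; simp } with hD
    have hDf : ∀ i, D (f i) = D h := by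
      intro i
      have h1 : D (g ^ i) * D ((g ^ i)⁻¹) = 1 := by
        rw [← map_mul, mul_inv_cancel, map_one]
      simp only [hf, map_mul]
      rw [mul_right_comm, ← map_mul, mul_inv_cancel, map_one, one_mul]
    have hDa : D a = D h ^ m := by
      rw [ha, ← List.prod_map_hom]
      have : (List.map (D ∘ f) (List.range m)) = List.replicate m (D h) := by
        refine List.eq_replicate_iff.mpr ⟨by simp, ?_⟩
        intro x hx
        simp only [List.mem_map] at hx
        obtain ⟨i, _, rfl⟩ := hx
        exact hDf i
      rw [this, List.prod_replicate]
    exact hDa
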